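/- arXiv:0804.1603 — 5 statements merged into one kernel-verified Lean document; each statement's English description precedes it below -/
import Mathlib

section
/- For any permutation π of E = {1,...,n} and any subset A ⊆ E, the vector x^π defined by x^π_{π_k} = f({π_1,...,π_k}) - f({π_1,...,π_{k-1}}) satisfies ∑_{i∈A} x^π_i ≤ f(A), where f is a normalized increasing submodular function. That is, x^π lies in the polymatroid P(f) = {x ≥ 0 : x(A) ≤ f(A) for all A ⊆ E}. -/
/-!
Order `A` by `π`. Peeling off its `π`-last element `a`, the greedy increment at `a` is the marginal
gain of `a` over the whole `π`-prefix before it, which contains `A \ {a}`; by submodularity this gain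
is at most `f A - f (A \ {a})`. Summing telescopes to `f A - f ∅`.
-/

open Finset

def Submodular {n : ℕ} (f : Finset (Fin n) → ℝ) : Prop :=
  ∀ A B : Finset (Fin n), f (A ∪ B) + f (A ∩ B) ≤ f A + f B

/-- The greedy vector `x^π`: `x^π_{π_k} = f({π_1,…,π_k}) − f({π_1,…,π_{k−1}})`. -/
def greedyVec {n : ℕ} (f : Finset (Fin n) → ℝ) (π : Equiv.Perm (Fin n)) (i : Fin n) : ℝ :=
  f (insert i ((Finset.Iio (π.symm i)).image π)) - f ((Finset.Iio (π.symm i)).image π)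

theorem Submodular.sub_le_sub_of_subset {n : ℕ} {f : Finset (Fin n) → ℝ} (hsub : Submodular f)
    {a : Fin n} {s S : Finset (Fin n)} (hsS : s ⊆ S) (haS : a ∉ S) :
    f (insert a S) - f S ≤ f (insert a s) - f s := by
  have hunion : insert a s ∪ S = insert a S := by
    rw [insert_union, union_eq_right.2 hsS]
  have hinter : insert a s ∩ S = s := by
    rw [insert_inter_of_notMem haS, inter_eq_left.2 hsS]
  have := hsub (insert a s) S
  rw [hunion, hinter] at this
  linarith

theorem mem_image_Iio_symm_iff {n : ℕ} (π : Equiv.Perm (Fin n)) (i j : Fin n) :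
    j ∈ (Iio (π.symm i)).image π ↔ π.symm j < π.symm i := by
  simp [← Equiv.eq_symm_apply]

theorem greedyVec_nonneg {n : ℕ} {f : Finset (Fin n) → ℝ}
    (hmono : ∀ A B : Finset (Fin n), A ⊆ B → f A ≤ f B) (π : Equiv.Perm (Fin n)) (i : Fin n) :
    0 ≤ greedyVec f π i :=
  sub_nonneg.2 (hmono _ _ (subset_insert _ _))

theorem greedyVec_le_sub_of_forall_le {n : ℕ} {f : Finset (Fin n) → ℝ} (hsub : Submodular f)
    (π : Equiv.Perm (Fin n)) {a : Fin n} {s : Finset (Fin n)} (has : a ∉ s)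
    (hlast : ∀ x ∈ s, π.symm x ≤ π.symm a) :
    greedyVec f π a ≤ f (insert a s) - f s := by
  have hprefix : s ⊆ (Iio (π.symm a)).image π := fun x hx =>
    (mem_image_Iio_symm_iff π a x).2 <|
      (hlast x hx).lt_of_ne fun h => has (π.symm.injective h ▸ hx)
  exact hsub.sub_le_sub_of_subset hprefix ((mem_image_Iio_symm_iff π a a).not.2 (lt_irrefl _))

theorem sum_greedyVec_le_sub {n : ℕ} {f : Finset (Fin n) → ℝ} (hsub : Submodular f)
    (π : Equiv.Perm (Fin n)) (A : Finset (Fin n)) :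
    ∑ i ∈ A, greedyVec f π i ≤ f A - f ∅ := by
  induction A using induction_on_max_value π.symm with
  | empty => simp
  | insert a s has hlast ih =>
    rw [sum_insert has]
    linarith [greedyVec_le_sub_of_forall_le hsub π has hlast]

theorem greedyVec_mem_polymatroid_general {n : ℕ} (f : Finset (Fin n) → ℝ)
    (hnorm : f ∅ = 0)
    (hmono : ∀ A B : Finset (Fin n), A ⊆ B → f A ≤ f B)
    (hsub : Submodular f)
    (π : Equiv.Perm (Fin n)) :
    (∀ i : Fin n, 0 ≤ greedyVec f π i) ∧
      ∀ A : Finset (Fin n), ∑ i ∈ A, greedyVec f π i ≤ f A :=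
  ⟨greedyVec_nonneg hmono π, fun A => by simpa [hnorm] using sum_greedyVec_le_sub hsub π A⟩

theorem greedyVec_mem_polymatroid {n : ℕ} (f : Finset (Fin n) → ℝ)
    (hnorm : f ∅ = 0)
    (hmono : ∀ A B : Finset (Fin n), A ⊆ B → f A ≤ f B)
    (hsub : Submodular f)
    (hnn : ∀ A : Finset (Fin n), 0 ≤ f A)
    (π : Equiv.Perm (Fin n)) :
    (∀ i : Fin n, 0 ≤ greedyVec f π i) ∧
      ∀ A : Finset (Fin n), ∑ i ∈ A, greedyVec f π i ≤ f A :=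
  greedyVec_mem_polymatroid_general f hnorm hmono hsub π
end

section
/- Suppose the polytope P(f) = {x ≥ 0 : x(A) ≤ f(A) for all A ⊆ E} contains x^π for every permutation π of E, where x^π is the greedy vector of partial differences of f along π. Then f is submodular, i.e., f(A) + f(B) ≥ f(A∪B) + f(A∩B) for all A, B ⊆ E. -/
open Finset

/-! If `π` lists `A ∩ B`, then `A \ B`, then `B \ A`, then the rest, the greedy vector `x = x^π`
is tight on the initial segments `A ∩ B`, `A` and `A ∪ B`, since its sum over an initial segment
telescopes. Hence `f (A ∪ B) + f (A ∩ B) = x (A ∪ B) + x (A ∩ B) = x A + x B ≤ f A + f B`. -/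

theorem Fin.mem_iff_lt_card_of_isLowerSet {n : ℕ} {s : Finset (Fin n)}
    (hs : IsLowerSet (s : Set (Fin n))) (k : Fin n) : k ∈ s ↔ (k : ℕ) < #s := by
  constructor
  · intro hk
    have hsub : Iic k ⊆ s := fun j hj => hs (mem_Iic.mp hj) hk
    simpa [Fin.card_Iic, Nat.succ_le_iff] using card_le_card hsub
  · intro hlt
    by_contra hk
    have hsub : s ⊆ Iio k := fun j hj => mem_Iio.mpr <| lt_of_not_ge fun hkj => hk (hs hkj hj)
    have := card_le_card hsub
    rw [Fin.card_Iio] at this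
    omega

namespace Equiv.Perm

variable {n : ℕ} (π : Equiv.Perm (Fin n))

def initialSegment (m : ℕ) : Finset (Fin n) :=
  {i | (π.symm i : ℕ) < m}

theorem initialSegment_eq_image_Iio (k : Fin n) :
    π.initialSegment k = (Iio k).image π := by
  ext i
  simp only [initialSegment, mem_filter, mem_univ, true_and, mem_image, mem_Iio]
  exact ⟨fun h => ⟨π.symm i, h, by simp⟩, by rintro ⟨j, hj, rfl⟩; simpa using hj⟩

theorem initialSegment_succ (k : Fin n) :
    π.initialSegment (k + 1) = insert (π k) (π.initialSegment k) := by
  ext i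
  simp only [initialSegment, mem_filter, mem_univ, true_and, mem_insert, Nat.lt_succ_iff_lt_or_eq,
    ← Fin.ext_iff, Equiv.symm_apply_eq, eq_comm (a := i)]
  tauto

theorem greedyVec_apply (f : Finset (Fin n) → ℝ) (k : Fin n) :
    greedyVec f π (π k) = f (π.initialSegment (k + 1)) - f (π.initialSegment k) := by
  simp [greedyVec, initialSegment_succ, initialSegment_eq_image_Iio]

theorem sum_greedyVec_initialSegment (f : Finset (Fin n) → ℝ) {m : ℕ} (hm : m ≤ n) :
    ∑ i ∈ π.initialSegment m, greedyVec f π i = f (π.initialSegment m) - f ∅ := by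
  induction m with
  | zero => simp [initialSegment]
  | succ m ih =>
    have hk := π.initialSegment_succ ⟨m, hm⟩
    have hnot : π ⟨m, hm⟩ ∉ π.initialSegment m := by simp [initialSegment]
    rw [hk, sum_insert hnot, ih (by omega), ← hk, π.greedyVec_apply f ⟨m, hm⟩]
    ring

theorem filter_lt_eq_initialSegment {α : Type*} [LinearOrder α] {r : Fin n → α}
    (hr : Monotone (r ∘ π)) (c : α) :
    ({i | r i < c} : Finset (Fin n)) = π.initialSegment #{i | r i < c} := by
  have hlower : IsLowerSet (({k | r (π k) < c} : Finset (Fin n)) : Set (Fin n)) :=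
    fun j k hkj hj => by simpa using (hr hkj).trans_lt (by simpa using hj)
  have hcard : #{k | r (π k) < c} = #{i | r i < c} :=
    card_bij (fun k _ => π k) (by simp) (by simp) (fun i hi => ⟨π.symm i, by simpa using hi, by simp⟩)
  ext i
  rw [initialSegment, mem_filter, mem_filter, ← hcard,
    ← Fin.mem_iff_lt_card_of_isLowerSet hlower]
  simp

theorem sum_greedyVec_filter_lt {α : Type*} [LinearOrder α] {r : Fin n → α}
    (hr : Monotone (r ∘ π)) (f : Finset (Fin n) → ℝ) (c : α) :
    ∑ i ∈ {i | r i < c}, greedyVec f π i = f {i | r i < c} - f ∅ := by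
  rw [π.filter_lt_eq_initialSegment hr c]
  exact π.sum_greedyVec_initialSegment f ((card_le_univ _).trans (Fintype.card_fin n).le)

end Equiv.Perm

theorem submodular_of_greedy_in_polytope_general {n : ℕ} (f : Finset (Fin n) → ℝ)
    (hnorm : f ∅ = 0)
    (hgreedy : ∀ π : Equiv.Perm (Fin n),
      (∀ i : Fin n, 0 ≤ greedyVec f π i) ∧
        ∀ A : Finset (Fin n), ∑ i ∈ A, greedyVec f π i ≤ f A) :
    Submodular f := by
  intro A B
  -- `r` ranks `A ∩ B < A \ B < B \ A < (A ∪ B)ᶜ`, so sorting by `r` lists these blocks in turn.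
  let r : Fin n → ℕ := fun i => (if i ∈ A then 0 else 2) + (if i ∈ B then 0 else 1)
  let π := Tuple.sort r
  have tight (c : ℕ) : ∑ i ∈ {i | r i < c}, greedyVec f π i = f {i | r i < c} := by
    rw [π.sum_greedyVec_filter_lt (Tuple.monotone_sort r), hnorm, sub_zero]
  have sublevel_one : ({i | r i < 1} : Finset (Fin n)) = A ∩ B := by
    ext i; simp only [r, mem_filter, mem_univ, true_and, mem_inter]; split_ifs <;> simp_all
  have sublevel_two : ({i | r i < 2} : Finset (Fin n)) = A := by
    ext i; simp only [r, mem_filter, mem_univ, true_and]; split_ifs <;> simp_all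
  have sublevel_three : ({i | r i < 3} : Finset (Fin n)) = A ∪ B := by
    ext i; simp only [r, mem_filter, mem_univ, true_and, mem_union]; split_ifs <;> simp_all
  have tight_inter := tight 1
  have tight_left := tight 2
  have tight_union := tight 3
  rw [sublevel_one] at tight_inter
  rw [sublevel_two] at tight_left
  rw [sublevel_three] at tight_union
  calc f (A ∪ B) + f (A ∩ B)
      = ∑ i ∈ A ∪ B, greedyVec f π i + ∑ i ∈ A ∩ B, greedyVec f π i := by
        rw [tight_union, tight_inter]
    _ = ∑ i ∈ A, greedyVec f π i + ∑ i ∈ B, greedyVec f π i := sum_union_inter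
    _ ≤ f A + f B := by
        rw [tight_left]
        gcongr
        exact (hgreedy π).2 B

theorem submodular_of_greedy_in_polytope {n : ℕ} (f : Finset (Fin n) → ℝ)
    (hnorm : f ∅ = 0)
    (hmono : ∀ A B : Finset (Fin n), A ⊆ B → f A ≤ f B)
    (hnn : ∀ A : Finset (Fin n), 0 ≤ f A)
    (hgreedy : ∀ π : Equiv.Perm (Fin n),
      (∀ i : Fin n, 0 ≤ greedyVec f π i) ∧
        ∀ A : Finset (Fin n), ∑ i ∈ A, greedyVec f π i ≤ f A) :
    Submodular f :=
  submodular_of_greedy_in_polytope_general f hnorm hgreedy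
end

section
/- Let f : 2^E → ℝ≥0 be normalized, increasing and submodular, and let c : E → ℝ with c_{π_1} ≥ c_{π_2} ≥ ... ≥ c_{π_n} for some permutation π. Then the greedy vector x^π (defined by x^π_{π_k} = f({π_1,...,π_k}) - f({π_1,...,π_{k-1}})) maximizes ∑_{i∈E} c_i x_i over all x in the polymatroid P(f) = {x ≥ 0 : x(A) ≤ f(A), ∀ A ⊆ E}. -/
open Finset

/-!
Reindex along `π`, so that the costs `c (π k)` decrease in `k`. By construction the prefix sums of
the greedy vector telescope to `f` of the prefix sets, so they dominate the prefix sums of any `x`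
with `x(A) ≤ f(A)`. Summation by parts writes `∑ c (π k) * y (π k)` as a combination of the prefix
sums of `y` with the nonnegative coefficients `c (π k) - c (π (k+1))` and `c (π (n-1))`, hence
the greedy vector wins.
-/

namespace Finset

variable {ι : Type*} [LinearOrder ι]

theorem filter_insert_le_of_lt {s : Finset ι} {i m : ι} (hi : i < m) :
    {j ∈ insert m s | j ≤ i} = {j ∈ s | j ≤ i} := by
  simp [filter_insert, not_le.mpr hi]

theorem sum_filter_le_sub_filter_lt {M : Type*} [AddCommGroup M] (s : Finset ι)
    (g : Finset ι → M) :
    ∑ i ∈ s, (g {j ∈ s | j ≤ i} - g {j ∈ s | j < i}) = g s - g ∅ := by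
  induction s using Finset.induction_on_max with
  | empty => simp
  | insert m s hlt ih =>
    have hm : m ∉ s := fun h => lt_irrefl m (hlt m h)
    have hs : ∀ i ∈ s, {j ∈ insert m s | j < i} = {j ∈ s | j < i} := fun i hi => by
      simp [filter_insert, not_lt.mpr (hlt i hi).le]
    have hle : {j ∈ insert m s | j ≤ m} = insert m s :=
      filter_true_of_mem fun j hj => (mem_insert.mp hj).elim le_of_eq fun h => (hlt j h).le
    have hlt' : {j ∈ insert m s | j < m} = s := by
      simp [filter_insert, filter_true_of_mem hlt]
    rw [sum_insert hm, hle, hlt', sum_congr rfl fun i hi => by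
      rw [filter_insert_le_of_lt (hlt i hi), hs i hi], ih]
    abel

theorem sum_mul_nonneg_of_antitoneOn {R : Type*} [CommRing R] [PartialOrder R] [IsOrderedRing R]
    {s : Finset ι} {a w : ι → R} (ha : AntitoneOn a s) (ha0 : ∀ i ∈ s, 0 ≤ a i)
    (hw : ∀ i ∈ s, 0 ≤ ∑ j ∈ s with j ≤ i, w j) :
    0 ≤ ∑ i ∈ s, a i * w i := by
  induction s using Finset.induction_on_max generalizing a with
  | empty => simp
  | insert m s hlt ih =>
    have hm : m ∉ s := fun h => lt_irrefl m (hlt m h)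
    have hle : {j ∈ insert m s | j ≤ m} = insert m s :=
      filter_true_of_mem fun j hj => (mem_insert.mp hj).elim le_of_eq fun h => (hlt j h).le
    -- Peel off the smallest weight `a m`; the remaining weights `a i - a m` vanish at `m`.
    have split : ∑ i ∈ insert m s, a i * w i
        = ∑ i ∈ s, (a i - a m) * w i + a m * ∑ i ∈ insert m s, w i := by
      simp only [sum_insert hm, sub_mul, sum_sub_distrib, mul_add, mul_sum]
      ring
    have hrest : 0 ≤ ∑ i ∈ s, (a i - a m) * w i := by
      refine ih (fun i hi j hj hij => ?_) (fun i hi => ?_) (fun i hi => ?_)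
      · exact sub_le_sub_right (ha (mem_insert_of_mem hi) (mem_insert_of_mem hj) hij) _
      · exact sub_nonneg.mpr (ha (mem_insert_of_mem hi) (mem_insert_self m s) (hlt i hi).le)
      · rw [← filter_insert_le_of_lt (hlt i hi)]
        exact hw i (mem_insert_of_mem hi)
    have htotal : 0 ≤ ∑ i ∈ insert m s, w i := hle ▸ hw m (mem_insert_self m s)
    rw [split]
    exact add_nonneg hrest (mul_nonneg (ha0 m (mem_insert_self m s)) htotal)

end Finset

theorem greedyVec_apply_perm {n : ℕ} (f : Finset (Fin n) → ℝ) (π : Equiv.Perm (Fin n))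
    (k : Fin n) : greedyVec f π (π k) = f ((Iic k).image π) - f ((Iio k).image π) := by
  rw [greedyVec, Equiv.symm_apply_apply, ← Iio_insert, image_insert]

theorem sum_Iic_greedyVec_perm {n : ℕ} {f : Finset (Fin n) → ℝ} (hnorm : f ∅ = 0)
    (π : Equiv.Perm (Fin n)) (k : Fin n) :
    ∑ i ∈ Iic k, greedyVec f π (π i) = f ((Iic k).image π) := by
  have hprefix : ∀ i ∈ Iic k,
      greedyVec f π (π i) = f ({j ∈ Iic k | j ≤ i}.image π) - f ({j ∈ Iic k | j < i}.image π) :=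
    fun i hi => by
      have hik : i ≤ k := mem_Iic.mp hi
      have hle : {j ∈ Iic k | j ≤ i} = Iic i := by
        ext j; simpa using fun hji : j ≤ i => hji.trans hik
      have hlt : {j ∈ Iic k | j < i} = Iio i := by
        ext j; simpa using fun hji : j < i => hji.le.trans hik
      rw [hle, hlt, greedyVec_apply_perm]
  rw [sum_congr rfl hprefix, sum_filter_le_sub_filter_lt (Iic k) (fun A => f (A.image π)),
    image_empty, hnorm, sub_zero]

theorem greedy_maximizes_lp_general {n : ℕ} (f : Finset (Fin n) → ℝ)
    (hnorm : f ∅ = 0)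
    (c : Fin n → ℝ) (hc : ∀ i, 0 ≤ c i)
    (π : Equiv.Perm (Fin n))
    (hsorted : ∀ k l : Fin n, k ≤ l → c (π l) ≤ c (π k)) :
    ∀ x : Fin n → ℝ, (∀ i, 0 ≤ x i) → (∀ A : Finset (Fin n), ∑ i ∈ A, x i ≤ f A) →
      ∑ i, c i * x i ≤ ∑ i, c i * greedyVec f π i := by
  intro x _ hxf
  have hprefix : ∀ k : Fin n,
      0 ≤ ∑ j ∈ univ with j ≤ k, (greedyVec f π (π j) - x (π j)) := fun k => by
    rw [filter_ge_eq_Iic, sum_sub_distrib, sum_Iic_greedyVec_perm hnorm,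
      ← sum_image fun a _ b _ h => π.injective h]
    exact sub_nonneg.mpr (hxf _)
  have hgap : 0 ≤ ∑ k, c (π k) * (greedyVec f π (π k) - x (π k)) :=
    sum_mul_nonneg_of_antitoneOn (fun k _ l _ hkl => hsorted k l hkl) (fun k _ => hc (π k))
      fun k _ => hprefix k
  rw [← Equiv.sum_comp π fun i => c i * x i, ← Equiv.sum_comp π fun i => c i * greedyVec f π i]
  simpa only [mul_sub, sum_sub_distrib, sub_nonneg] using hgap

theorem greedy_maximizes_lp {n : ℕ} (f : Finset (Fin n) → ℝ)
    (hnorm : f ∅ = 0)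
    (hmono : ∀ A B : Finset (Fin n), A ⊆ B → f A ≤ f B)
    (hsub : Submodular f)
    (hnn : ∀ A : Finset (Fin n), 0 ≤ f A)
    (c : Fin n → ℝ) (hc : ∀ i, 0 ≤ c i)
    (π : Equiv.Perm (Fin n))
    (hsorted : ∀ k l : Fin n, k ≤ l → c (π l) ≤ c (π k)) :
    ∀ x : Fin n → ℝ, (∀ i, 0 ≤ x i) → (∀ A : Finset (Fin n), ∑ i ∈ A, x i ≤ f A) →
      ∑ i, c i * x i ≤ ∑ i, c i * greedyVec f π i :=
  greedy_maximizes_lp_general f hnorm c hc π hsorted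
end

section
/- Let E be partitioned into disjoint groups G_1, ..., G_m with G^{(i)} = G_1 ∪ ... ∪ G_i and G^{(0)} = ∅. Suppose a vector x ≥ 0 satisfies x(A) ≤ f(G^{(i-1)} ∪ A) - f(G^{(i-1)}) for every i and every A ⊆ G_i, where f is normalized, increasing and submodular. Then x(A) ≤ f(A) for every A ⊆ E. -/
/-!
Adding the block `A ∩ G_j` to `A ∩ G^{(j)}` gains at least as much as adding it to the larger
set `G^{(j)}` (submodularity), and the latter gain dominates `x(A ∩ G_j)` by hypothesis. Hence
`x(A ∩ G^{(j)}) ≤ f(A ∩ G^{(j)})` by induction on `j`, and `A ∩ G^{(m)} = A`.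
-/

open Finset

/-- `cumUnion G j = G_1 ∪ ⋯ ∪ G_j` (0-indexed: union of `G 0, …, G (j-1)`). -/
def cumUnion {n : ℕ} (G : ℕ → Finset (Fin n)) (j : ℕ) : Finset (Fin n) :=
  (Finset.range j).biUnion G

section

variable {n : ℕ}

theorem Submodular.sub_le_sub_of_subset_s6 {f : Finset (Fin n) → ℝ} (hsub : Submodular f)
    {S C T : Finset (Fin n)} (hSC : S ⊆ C) (hCT : Disjoint C T) :
    f (C ∪ T) - f C ≤ f (S ∪ T) - f S := by
  have hunion : C ∪ (S ∪ T) = C ∪ T := by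
    rw [← union_assoc, union_eq_left.mpr hSC]
  have hinter : C ∩ (S ∪ T) = S := by
    rw [inter_union_distrib_left, inter_eq_right.mpr hSC, disjoint_iff_inter_eq_empty.mp hCT,
      union_empty]
  have := hsub C (S ∪ T)
  rw [hunion, hinter] at this
  linarith

theorem cumUnion_zero (G : ℕ → Finset (Fin n)) : cumUnion G 0 = ∅ := rfl

theorem cumUnion_succ (G : ℕ → Finset (Fin n)) (j : ℕ) :
    cumUnion G (j + 1) = cumUnion G j ∪ G j := by
  rw [cumUnion, range_add_one, biUnion_insert, union_comm, cumUnion]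

theorem disjoint_cumUnion_self {G : ℕ → Finset (Fin n)} {j : ℕ}
    (hdisj : ∀ j' < j, Disjoint (G j') (G j)) : Disjoint (cumUnion G j) (G j) :=
  (disjoint_biUnion_left _ _ _).mpr fun j' hj' => hdisj j' (mem_range.mp hj')

theorem sum_inter_cumUnion_le {f : Finset (Fin n) → ℝ} (hnorm : f ∅ = 0) (hsub : Submodular f)
    {G : ℕ → Finset (Fin n)} {x : Fin n → ℝ} (A : Finset (Fin n)) :
    ∀ k, (∀ j < k, Disjoint (cumUnion G j) (G j)) →
      (∀ j < k, ∑ i ∈ A ∩ G j, x i ≤ f (cumUnion G j ∪ A ∩ G j) - f (cumUnion G j)) →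
      ∑ i ∈ A ∩ cumUnion G k, x i ≤ f (A ∩ cumUnion G k)
  | 0, _, _ => by simp [cumUnion_zero, hnorm]
  | k + 1, hdisj, hgrp => by
    have ih := sum_inter_cumUnion_le hnorm hsub A k
      (fun j hj => hdisj j (by omega)) (fun j hj => hgrp j (by omega))
    have hCT : Disjoint (cumUnion G k) (A ∩ G k) :=
      (hdisj k k.lt_succ_self).mono_right inter_subset_right
    have hgain := hsub.sub_le_sub_of_subset_s6 (inter_subset_right : A ∩ cumUnion G k ⊆ _) hCT
    rw [cumUnion_succ, inter_union_distrib_left,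
      sum_union (hCT.mono_left inter_subset_right)]
    linarith [hgrp k k.lt_succ_self]

end

theorem grouping_feasibility_general {n m : ℕ} (f : Finset (Fin n) → ℝ)
    (hnorm : f ∅ = 0)
    (hsub : Submodular f)
    (G : ℕ → Finset (Fin n))
    (hpart : (Finset.range m).biUnion G = Finset.univ)
    (hdisj : ∀ j < m, ∀ j' < m, j ≠ j' → Disjoint (G j) (G j'))
    (x : Fin n → ℝ)
    (hgrp : ∀ j < m, ∀ A ⊆ G j,
      ∑ i ∈ A, x i ≤ f (cumUnion G j ∪ A) - f (cumUnion G j)) :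
    ∀ A : Finset (Fin n), ∑ i ∈ A, x i ≤ f A := by
  intro A
  have hprefix : ∀ j < m, Disjoint (cumUnion G j) (G j) := fun j hj =>
    disjoint_cumUnion_self fun j' hj' => hdisj j' (hj'.trans hj) j hj hj'.ne
  have hcover : A ∩ cumUnion G m = A := by
    rw [cumUnion, hpart, inter_univ]
  simpa only [hcover] using sum_inter_cumUnion_le hnorm hsub A m hprefix
    fun j hj => hgrp j hj (A ∩ G j) inter_subset_right

theorem grouping_feasibility {n m : ℕ} (f : Finset (Fin n) → ℝ)
    (hnorm : f ∅ = 0)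
    (hmono : ∀ A B : Finset (Fin n), A ⊆ B → f A ≤ f B)
    (hsub : Submodular f)
    (G : ℕ → Finset (Fin n))
    (hpart : (Finset.range m).biUnion G = Finset.univ)
    (hdisj : ∀ j < m, ∀ j' < m, j ≠ j' → Disjoint (G j) (G j'))
    (x : Fin n → ℝ) (hx : ∀ i, 0 ≤ x i)
    (hgrp : ∀ j < m, ∀ A ⊆ G j,
      ∑ i ∈ A, x i ≤ f (cumUnion G j ∪ A) - f (cumUnion G j)) :
    ∀ A : Finset (Fin n), ∑ i ∈ A, x i ≤ f A :=
  grouping_feasibility_general f hnorm hsub G hpart hdisj x hgrp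
end

section
/- In the dual LP min ∑_{A⊆E} y_A f(A) − ∑_{i∈E} d_i z_i subject to ∑_{A∋i} y_A − z_i ≥ c_i for all i and y, z ≥ 0, the assignment y_{G^{(j)}} = c_{ℓ_j} − c_{ℓ_{j+1}} (with c_{ℓ_{m+1}} = 0), z_k = c_{ℓ_j} − c_k for k ∈ G_j^S, and all other variables zero, is feasible whenever ℓ_j ≤ ℓ_{j+1} for all j and ℓ_j ≤ k for all k ∈ G_j^S, given c_1 ≥ c_2 ≥ ... ≥ c_n > 0. -/
/-!
An element `i` of the group `G j` lies in exactly the cumulative unions `G^{(j+1)}, …, G^{(m)}`,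
so its column of the dual constraint is the telescoping sum `c_{ℓ_j} - c_{ℓ_{m+1}} = c_{ℓ_j}`;
subtracting `z_i = c_{ℓ_j} - c_i` leaves exactly `c_i`. Nonnegativity of `y` and `z` is the
monotonicity of `c` along `ℓ_j ≤ ℓ_{j+1}` and `ℓ_j ≤ k`.
-/

open Finset

theorem Finset.sum_Ico_sub_succ {M : Type*} [AddCommGroup M] (g : ℕ → M) {a b : ℕ} (hab : a ≤ b) :
    ∑ t ∈ Ico a b, (g t - g (t + 1)) = g a - g b := by
  have := sum_Ico_sub g hab
  rw [← neg_sub, ← this, ← sum_neg_distrib]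
  simp only [neg_sub]

theorem Finset.sum_filter_of_support_subset_image {α β M : Type*} [Fintype α] [DecidableEq α]
    [AddCommMonoid M] {s : Finset β} {f : β → α} (hf : Set.InjOn f s) {y : α → M}
    (hy : ∀ a, a ∉ s.image f → y a = 0) (p : α → Prop) [DecidablePred p] :
    ∑ a ∈ univ.filter p, y a = ∑ b ∈ s.filter (fun b => p (f b)), y (f b) := by
  rw [sum_filter, sum_filter, ← sum_image (g := f) (f := fun a => if p a then y a else 0) hf]
  refine (sum_subset (subset_univ _) fun a _ ha => ?_).symm
  simp [hy a ha]

section cumUnion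

variable {n m : ℕ} {G : ℕ → Finset (Fin n)}

theorem mem_cumUnion_iff_lt (hdisj : ∀ j < m, ∀ j' < m, j ≠ j' → Disjoint (G j) (G j'))
    {i : Fin n} {j k : ℕ} (hj : j < m) (hi : i ∈ G j) :
    i ∈ cumUnion G k ↔ j < k := by
  simp only [cumUnion, mem_biUnion, mem_range]
  refine ⟨fun ⟨t, htk, hit⟩ => ?_, fun hjk => ⟨j, hjk, hi⟩⟩
  by_contra hjk
  exact disjoint_left.mp (hdisj t (by omega) j hj (by omega)) hit hi

theorem cumUnion_succ_injOn (hdisj : ∀ j < m, ∀ j' < m, j ≠ j' → Disjoint (G j) (G j'))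
    {ℓ : ℕ → Fin n} (hlead : ∀ j < m, ℓ j ∈ G j) :
    Set.InjOn (fun j => cumUnion G (j + 1)) (range m) := by
  have hle : ∀ a b, b < m → cumUnion G (a + 1) = cumUnion G (b + 1) → b ≤ a := by
    intro a b hb hab
    have hmem := (mem_cumUnion_iff_lt hdisj hb (hlead b hb) (k := b + 1)).mpr (by omega)
    rw [← hab, mem_cumUnion_iff_lt hdisj hb (hlead b hb)] at hmem
    omega
  intro a ha b hb hab
  rw [coe_range, Set.mem_Iio] at ha hb
  exact le_antisymm (hle b a ha hab.symm) (hle a b hb hab)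

theorem sum_filter_mem_eq_of_cumUnion_telescoping
    (hdisj : ∀ j < m, ∀ j' < m, j ≠ j' → Disjoint (G j) (G j'))
    {ℓ : ℕ → Fin n} (hlead : ∀ j < m, ℓ j ∈ G j) {g : ℕ → ℝ} (hg : g m = 0)
    {y : Finset (Fin n) → ℝ} (hy : ∀ j < m, y (cumUnion G (j + 1)) = g j - g (j + 1))
    (hy0 : ∀ A : Finset (Fin n), (∀ j < m, A ≠ cumUnion G (j + 1)) → y A = 0)
    {i : Fin n} {j : ℕ} (hj : j < m) (hi : i ∈ G j) :
    ∑ A ∈ univ.filter (fun A => i ∈ A), y A = g j := by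
  have hsupp : ∀ A, A ∉ (range m).image (fun j => cumUnion G (j + 1)) → y A = 0 := by
    intro A hA
    exact hy0 A fun t ht hAt => hA (mem_image.mpr ⟨t, mem_range.mpr ht, hAt.symm⟩)
  have hfilter : (range m).filter (fun t => i ∈ cumUnion G (t + 1)) = Ico j m := by
    ext t
    simp only [mem_filter, mem_range, mem_Ico, mem_cumUnion_iff_lt hdisj hj hi]
    omega
  rw [sum_filter_of_support_subset_image (cumUnion_succ_injOn hdisj hlead) hsupp, hfilter,
    sum_congr rfl fun t ht => hy t (mem_Ico.mp ht).2, sum_Ico_sub_succ g hj.le, hg, sub_zero]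

end cumUnion

theorem dual_assignment_feasible_general {n m : ℕ}
    (c : Fin n → ℝ)
    (hcdec : ∀ i j : Fin n, i ≤ j → c j ≤ c i)
    (hcpos : ∀ i, 0 < c i)
    (G : ℕ → Finset (Fin n)) (ℓ : ℕ → Fin n)
    (hpart : (Finset.range m).biUnion G = Finset.univ)
    (hdisj : ∀ j < m, ∀ j' < m, j ≠ j' → Disjoint (G j) (G j'))
    (hlead : ∀ j < m, ℓ j ∈ G j)
    (hlmono : ∀ j, j + 1 < m → ℓ j ≤ ℓ (j + 1))
    (hlmin : ∀ j < m, ∀ k ∈ G j \ {ℓ j}, ℓ j ≤ k)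
    (y : Finset (Fin n) → ℝ) (z : Fin n → ℝ)
    (hy : ∀ j < m,
      y (cumUnion G (j + 1)) = c (ℓ j) - (if j + 1 < m then c (ℓ (j + 1)) else 0))
    (hy0 : ∀ A : Finset (Fin n), (∀ j < m, A ≠ cumUnion G (j + 1)) → y A = 0)
    (hz : ∀ j < m, ∀ k ∈ G j \ {ℓ j}, z k = c (ℓ j) - c k)
    (hz0 : ∀ j < m, z (ℓ j) = 0) :
    (∀ A : Finset (Fin n), 0 ≤ y A) ∧ (∀ i, 0 ≤ z i) ∧
      ∀ i : Fin n,
        c i ≤ (∑ A ∈ Finset.univ.filter (fun A : Finset (Fin n) => i ∈ A), y A) - z i := by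
  have hgroup : ∀ i, ∃ j < m, i ∈ G j := fun i => by
    simpa using (hpart ▸ mem_univ i : i ∈ (range m).biUnion G)
  have hz_lead : ∀ j < m, ∀ i ∈ G j, z i = c (ℓ j) - c i ∧ ℓ j ≤ i := by
    intro j hj i hi
    by_cases hil : i = ℓ j
    · subst hil
      simp [hz0 j hj]
    · have hmem : i ∈ G j \ {ℓ j} := mem_sdiff.mpr ⟨hi, notMem_singleton.mpr hil⟩
      exact ⟨hz j hj i hmem, hlmin j hj i hmem⟩
  refine ⟨fun A => ?_, fun i => ?_, fun i => ?_⟩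
  · by_cases hA : ∀ j < m, A ≠ cumUnion G (j + 1)
    · rw [hy0 A hA]
    push Not at hA
    obtain ⟨j, hj, rfl⟩ := hA
    rw [hy j hj]
    split_ifs with hj'
    · linarith [hcdec _ _ (hlmono j hj')]
    · linarith [hcpos (ℓ j)]
  · obtain ⟨j, hj, hi⟩ := hgroup i
    obtain ⟨hzi, hli⟩ := hz_lead j hj i hi
    linarith [hcdec _ _ hli]
  · obtain ⟨j, hj, hi⟩ := hgroup i
    let g : ℕ → ℝ := fun t => if t < m then c (ℓ t) else 0
    have hyg : ∀ t < m, y (cumUnion G (t + 1)) = g t - g (t + 1) := fun t ht => by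
      simp only [g, hy t ht, if_pos ht]
    rw [sum_filter_mem_eq_of_cumUnion_telescoping hdisj hlead (g := g) (by simp [g]) hyg hy0 hj hi,
      (hz_lead j hj i hi).1]
    simp [g, hj]

theorem dual_assignment_feasible {n m : ℕ}
    (c : Fin n → ℝ)
    (hcdec : ∀ i j : Fin n, i ≤ j → c j ≤ c i)
    (hcpos : ∀ i, 0 < c i)
    (G : ℕ → Finset (Fin n)) (ℓ : ℕ → Fin n)
    (hpart : (Finset.range m).biUnion G = Finset.univ)
    (hdisj : ∀ j < m, ∀ j' < m, j ≠ j' → Disjoint (G j) (G j'))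
    (hne : ∀ j < m, (G j).Nonempty)
    (hlead : ∀ j < m, ℓ j ∈ G j)
    (hlmono : ∀ j, j + 1 < m → ℓ j ≤ ℓ (j + 1))
    (hlmin : ∀ j < m, ∀ k ∈ G j \ {ℓ j}, ℓ j ≤ k)
    (y : Finset (Fin n) → ℝ) (z : Fin n → ℝ)
    (hy : ∀ j < m,
      y (cumUnion G (j + 1)) = c (ℓ j) - (if j + 1 < m then c (ℓ (j + 1)) else 0))
    (hy0 : ∀ A : Finset (Fin n), (∀ j < m, A ≠ cumUnion G (j + 1)) → y A = 0)
    (hz : ∀ j < m, ∀ k ∈ G j \ {ℓ j}, z k = c (ℓ j) - c k)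
    (hz0 : ∀ j < m, z (ℓ j) = 0) :
    (∀ A : Finset (Fin n), 0 ≤ y A) ∧ (∀ i, 0 ≤ z i) ∧
      ∀ i : Fin n,
        c i ≤ (∑ A ∈ Finset.univ.filter (fun A : Finset (Fin n) => i ∈ A), y A) - z i :=
  dual_assignment_feasible_general c hcdec hcpos G ℓ hpart hdisj hlead hlmono hlmin y z hy hy0 hz
    hz0
end
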